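/- arXiv:2205.13871 — 6 statements merged into one kernel-verified Lean document; each statement's English description precedes it below -/
import Mathlib

section
/- Assume that for each state s ∈ S there is a path of non-zero probability starting in s that contains a symbol from Σ. Then for every start state s₀ ∈ S and every n ∈ ℕ, the probabilities of all sequences in the sample space sum to one: ∑_{z̃ ∈ Ωⁿ_{s₀}} Pⁿ_{s₀}(z̃) = 1. -/
open scoped ENNReal

/-- A Hidden Markov Model with ε-transitions: a finite state space `S`, a finite
alphabet `A`, and for each state a probability function on `(Σ ∪ {ε}) × S`,
where `ε` is modelled by `none`. -/
structure HMMeps (S A : Type*) [Fintype S] [Fintype A] where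
  δ : S → Option A × S → ℝ≥0∞
  sum_one : ∀ s : S, ∑ p : Option A × S, δ s p = 1

namespace HMMeps

variable {S A : Type*} [Fintype S] [Fintype A]

/-- The probability of an alternating sequence `s₀ a₁ s₁ … a_m s_m`, represented by
its start state `s₀` together with the list of steps `[(a₁,s₁),…,(a_m,s_m)]`:
the product of the transition probabilities. -/
noncomputable def pathProb (M : HMMeps S A) : S → List (Option A × S) → ℝ≥0∞
  | _, [] => 1
  | s, p :: rest => M.δ s p * M.pathProb p.2 rest

/-- The observable projection `Y`: the sequence of observable symbols
(ε's and states removed). -/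
def obsSeq (z : List (Option A × S)) : List A := z.filterMap Prod.fst

/-- The last state `L` of a sequence starting in `s₀`. -/
def lastState (s₀ : S) (z : List (Option A × S)) : S :=
  (z.getLast?.map Prod.snd).getD s₀

/-- The sample space `Ωⁿ_{s₀} = s₀((εS)*ΣS)ⁿ`: alternating sequences containing
exactly `n` observable symbols whose second-to-last element (i.e. the symbol of the
last transition) is observable.  (The start state is kept separately, so an element
of the sample space is just the list of steps.) -/
def Omega (S A : Type*) (n : ℕ) : Set (List (Option A × S)) :=
  {z | (obsSeq z).length = n ∧ ∀ p ∈ z.getLast?, (Prod.fst p).isSome = true}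

end HMMeps

/-!
Every `z ∈ Ωⁿ⁺¹` splits uniquely as a block `ε t₁ … ε tₖ a t`, running up to and including the
first observable step, followed by some `r ∈ Ωⁿ`, and `pathProb` is multiplicative along this
split. By induction on `n` it therefore suffices that from every state the blocks have total
probability one, i.e. that an observable symbol is emitted almost surely. The probability of a run
of `k` ε-steps is non-increasing in `k`; by the hypothesis it drops below one from every state, so,
`S` being finite, it is at most some `c < 1` after a common number `N` of steps from every state,
hence at most `cʲ` after `jN` steps, and it tends to zero.
-/

namespace HMMeps

open Filter Topology

section Blocks

variable {S A : Type*}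

def block (l : List S) (q : A × S) : List (Option A × S) :=
  l.map (fun t => (none, t)) ++ [(some q.1, q.2)]

lemma block_cons (t : S) (l : List S) (q : A × S) :
    block (t :: l) q = (none, t) :: block l q := rfl

lemma block_append_inj {l₁ l₂ : List S} {q₁ q₂ : A × S} {r₁ r₂ : List (Option A × S)} :
    block l₁ q₁ ++ r₁ = block l₂ q₂ ++ r₂ ↔ l₁ = l₂ ∧ q₁ = q₂ ∧ r₁ = r₂ := by
  induction l₁ generalizing l₂ with
  | nil => cases l₂ <;> simp [block, Prod.ext_iff]
  | cons t l₁ ih =>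
    cases l₂ with
    | nil => simp [block]
    | cons => simp [block_cons, ih, and_assoc]

lemma exists_eq_block_append {z : List (Option A × S)} (hz : ∃ p ∈ z, p.1.isSome) :
    ∃ l q r, z = block l q ++ r := by
  induction z with
  | nil => simp at hz
  | cons p z ih =>
    obtain ⟨_ | a, t⟩ := p
    · obtain ⟨l, q, r, rfl⟩ := ih (by simpa using hz)
      exact ⟨t :: l, q, r, rfl⟩
    · exact ⟨[], (a, t), z, rfl⟩

lemma Omega_zero : Omega S A 0 = {[]} := by
  ext z
  refine ⟨fun ⟨hlen, hlast⟩ => ?_, by rintro rfl; exact ⟨rfl, by simp⟩⟩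
  rw [Set.mem_singleton_iff, ← List.getLast?_eq_none_iff]
  by_contra hne
  obtain ⟨p, hp⟩ := Option.ne_none_iff_exists'.1 hne
  obtain ⟨a, ha⟩ := Option.isSome_iff_exists.1 (hlast p hp)
  have : a ∈ obsSeq z := List.mem_filterMap.2 ⟨p, List.mem_of_getLast? hp, ha⟩
  simp_all [List.length_eq_zero_iff]

lemma block_append_mem_Omega_succ_iff {n : ℕ} {l : List S} {q : A × S}
    {r : List (Option A × S)} : block l q ++ r ∈ Omega S A (n + 1) ↔ r ∈ Omega S A n := by
  have hobs : obsSeq (block l q ++ r) = q.1 :: obsSeq r := by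
    simp [obsSeq, block, List.filterMap_append, List.filterMap_map]
  simp only [Omega, Set.mem_ofPred_eq, hobs, List.length_cons, Nat.add_right_cancel_iff,
    and_congr_right_iff]
  intro _
  cases r with
  | nil => simp [block]
  | cons p r => rw [List.getLast?_append_of_ne_nil _ (List.cons_ne_nil p r)]

lemma exists_isSome_of_mem_Omega_succ {n : ℕ} {z : List (Option A × S)}
    (hz : z ∈ Omega S A (n + 1)) : ∃ p ∈ z, p.1.isSome := by
  obtain ⟨a, ha⟩ := List.exists_mem_of_length_pos (by rw [hz.1]; exact n.succ_pos)
  obtain ⟨p, hp, hpa⟩ := List.mem_filterMap.1 ha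
  exact ⟨p, hp, Option.isSome_iff_exists.2 ⟨a, hpa⟩⟩

noncomputable def omegaSuccEquiv (n : ℕ) : (List S × (A × S)) × Omega S A n ≃ Omega S A (n + 1) :=
  Equiv.ofBijective
    (fun x => ⟨block x.1.1 x.1.2 ++ x.2.1, block_append_mem_Omega_succ_iff.2 x.2.2⟩) <| by
    refine ⟨fun ⟨⟨l₁, q₁⟩, r₁⟩ ⟨⟨l₂, q₂⟩, r₂⟩ h => ?_, fun ⟨z, hz⟩ => ?_⟩
    · obtain ⟨hl, hq, hr⟩ := block_append_inj.1 (congrArg Subtype.val h)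
      exact Prod.ext (Prod.ext hl hq) (Subtype.ext hr)
    · obtain ⟨l, q, r, rfl⟩ := exists_eq_block_append (exists_isSome_of_mem_Omega_succ hz)
      exact ⟨((l, q), ⟨r, block_append_mem_Omega_succ_iff.1 hz⟩), rfl⟩

end Blocks

variable {S A : Type*} [Fintype S] [Fintype A] (M : HMMeps S A)

lemma sum_option_prod (f : Option A × S → ℝ≥0∞) :
    ∑ p : Option A × S, f p = ∑ t : S, f (none, t) + ∑ q : A × S, f (some q.1, q.2) := by
  rw [Fintype.sum_prod_type, Fintype.sum_option, Fintype.sum_prod_type]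

noncomputable def epsProb : ℕ → S → ℝ≥0∞
  | 0, _ => 1
  | k + 1, s => ∑ t : S, M.δ s (none, t) * epsProb k t

noncomputable def firstObsProb : ℕ → S → ℝ≥0∞
  | 0, s => ∑ q : A × S, M.δ s (some q.1, q.2)
  | k + 1, s => ∑ t : S, M.δ s (none, t) * firstObsProb k t

lemma firstObsProb_add_epsProb_succ (k : ℕ) (s : S) :
    M.firstObsProb k s + M.epsProb (k + 1) s = M.epsProb k s := by
  induction k generalizing s with
  | zero =>
    simpa [firstObsProb, epsProb, sum_option_prod, add_comm] using M.sum_one s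
  | succ k ih =>
    simp only [firstObsProb, epsProb] at ih ⊢
    rw [← Finset.sum_add_distrib]
    exact Finset.sum_congr rfl fun t _ => by rw [← mul_add, ih t]

lemma sum_range_firstObsProb_add_epsProb (m : ℕ) (s : S) :
    ∑ k ∈ Finset.range m, M.firstObsProb k s + M.epsProb m s = 1 := by
  induction m with
  | zero => simp [epsProb]
  | succ m ih => rw [Finset.sum_range_succ, add_assoc, M.firstObsProb_add_epsProb_succ, ih]

lemma epsProb_le_one (m : ℕ) (s : S) : M.epsProb m s ≤ 1 :=
  (M.sum_range_firstObsProb_add_epsProb m s).le.trans' le_add_self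

lemma epsProb_antitone (s : S) : Antitone fun m => M.epsProb m s :=
  antitone_nat_of_succ_le fun m => (M.firstObsProb_add_epsProb_succ m s).le.trans' le_add_self

lemma epsProb_add_le_mul {N : ℕ} {c : ℝ≥0∞} (hc : ∀ t, M.epsProb N t ≤ c) (m : ℕ) (s : S) :
    M.epsProb (m + N) s ≤ c * M.epsProb m s := by
  induction m generalizing s with
  | zero => simpa [epsProb] using hc s
  | succ m ih =>
    rw [Nat.succ_add, epsProb, epsProb, Finset.mul_sum]
    refine Finset.sum_le_sum fun t _ => ?_
    calc M.δ s (none, t) * M.epsProb (m + N) t ≤ M.δ s (none, t) * (c * M.epsProb m t) := by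
          gcongr; exact ih t
      _ = c * (M.δ s (none, t) * M.epsProb m t) := mul_left_comm _ _ _

lemma epsProb_mul_le_pow {N : ℕ} {c : ℝ≥0∞} (hc : ∀ t, M.epsProb N t ≤ c) (j : ℕ) (s : S) :
    M.epsProb (j * N) s ≤ c ^ j := by
  induction j generalizing s with
  | zero => simp [epsProb]
  | succ j ih =>
    calc M.epsProb ((j + 1) * N) s = M.epsProb (j * N + N) s := by rw [Nat.succ_mul]
      _ ≤ c * M.epsProb (j * N) s := M.epsProb_add_le_mul hc _ s
      _ ≤ c * c ^ j := by gcongr; exact ih s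
      _ = c ^ (j + 1) := (pow_succ' c j).symm

lemma exists_epsProb_le_lt_one (h : ∀ s, ∃ m, M.epsProb m s < 1) :
    ∃ N c, c < 1 ∧ ∀ t, M.epsProb N t ≤ c := by
  choose m hm using h
  refine ⟨Finset.univ.sup m, Finset.univ.sup (M.epsProb (Finset.univ.sup m)),
    (Finset.sup_lt_iff zero_lt_one).2 fun t _ => ?_, fun t => Finset.le_sup (Finset.mem_univ t)⟩
  exact (M.epsProb_antitone t (Finset.le_sup (Finset.mem_univ t))).trans_lt (hm t)

lemma tendsto_epsProb_zero (h : ∀ s, ∃ m, M.epsProb m s < 1) (s : S) :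
    Tendsto (fun m => M.epsProb m s) atTop (𝓝 0) := by
  obtain ⟨N, c, hc1, hc⟩ := M.exists_epsProb_le_lt_one h
  have hinf : ⨅ m, M.epsProb m s = 0 :=
    nonpos_iff_eq_zero.1 <| ge_of_tendsto' (ENNReal.tendsto_pow_atTop_nhds_zero_of_lt_one hc1)
      fun j => (iInf_le _ (j * N)).trans (M.epsProb_mul_le_pow hc j s)
  exact hinf ▸ tendsto_atTop_iInf (M.epsProb_antitone s)

lemma tsum_firstObsProb_eq_one {s : S} (h : Tendsto (fun m => M.epsProb m s) atTop (𝓝 0)) :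
    ∑' k, M.firstObsProb k s = 1 := by
  have hsum := (ENNReal.tendsto_nat_tsum fun k => M.firstObsProb k s).add h
  simp only [M.sum_range_firstObsProb_add_epsProb, add_zero] at hsum
  exact tendsto_nhds_unique hsum tendsto_const_nhds

lemma pathProb_block_append (s : S) (l : List S) (q : A × S) (r : List (Option A × S)) :
    M.pathProb s (block l q ++ r) = M.pathProb s (block l q) * M.pathProb q.2 r := by
  induction l generalizing s with
  | nil => simp [block, pathProb]
  | cons t l ih => simp only [block_cons, List.cons_append, pathProb, ih, mul_assoc]

lemma sum_pathProb_block (k : ℕ) (s : S) :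
    ∑ v : Fin k → S, ∑ q : A × S, M.pathProb s (block (List.ofFn v) q) = M.firstObsProb k s := by
  induction k generalizing s with
  | zero => simp [firstObsProb, block, pathProb]
  | succ k ih =>
    rw [← (Fin.consEquiv fun _ => S).sum_comp, Fintype.sum_prod_type, firstObsProb]
    refine Finset.sum_congr rfl fun t _ => ?_
    simp [Fin.consEquiv, List.ofFn_succ, block_cons, pathProb, ← ih, Finset.mul_sum]

lemma tsum_pathProb_block (s : S) :
    ∑' (l : List S) (q : A × S), M.pathProb s (block l q) = ∑' k, M.firstObsProb k s := by
  rw [← List.equivSigmaTuple.symm.tsum_eq, ENNReal.tsum_sigma']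
  refine tsum_congr fun k => ?_
  simp only [tsum_fintype, List.equivSigmaTuple_symm_apply, M.sum_pathProb_block]

lemma pathProb_block_le_firstObsProb (s : S) (l : List S) (q : A × S) :
    M.pathProb s (block l q) ≤ M.firstObsProb l.length s := by
  rw [← M.sum_pathProb_block]
  refine le_trans ?_ (Finset.single_le_sum (fun _ _ => zero_le) (Finset.mem_univ l.get))
  refine le_trans ?_ (Finset.single_le_sum (fun _ _ => zero_le) (Finset.mem_univ q))
  rw [List.ofFn_get]

lemma exists_epsProb_lt_one {s : S}
    (hs : ∃ z, 0 < M.pathProb s z ∧ ∃ p ∈ z, (Prod.fst p).isSome = true) :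
    ∃ m, M.epsProb m s < 1 := by
  obtain ⟨z, hpos, hobs⟩ := hs
  obtain ⟨l, q, r, rfl⟩ := exists_eq_block_append hobs
  rw [pathProb_block_append] at hpos
  have hfirst : 0 < M.firstObsProb l.length s :=
    (pos_of_ne_zero (left_ne_zero_of_mul hpos.ne')).trans_le
      (M.pathProb_block_le_firstObsProb s l q)
  refine ⟨l.length + 1, ?_⟩
  calc M.epsProb (l.length + 1) s < M.epsProb (l.length + 1) s + M.firstObsProb l.length s :=
        ENNReal.lt_add_right (ne_top_of_le_ne_top ENNReal.one_ne_top (M.epsProb_le_one _ _)) hfirst.ne'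
    _ = M.epsProb l.length s := by rw [add_comm, M.firstObsProb_add_epsProb_succ]
    _ ≤ 1 := M.epsProb_le_one _ s

lemma tsum_Omega_pathProb_eq_one_of_blocks
    (hblock : ∀ s, ∑' (l : List S) (q : A × S), M.pathProb s (block l q) = 1) (n : ℕ) (s : S) :
    ∑' z : Omega S A n, M.pathProb s z.1 = 1 := by
  induction n generalizing s with
  | zero => rw [Omega_zero, tsum_singleton]; rfl
  | succ n ih =>
    calc ∑' z : Omega S A (n + 1), M.pathProb s z.1
        = ∑' (l : List S) (q : A × S) (r : Omega S A n), M.pathProb s (block l q ++ r.1) := by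
          rw [← (omegaSuccEquiv n).tsum_eq, ENNReal.tsum_prod', ENNReal.tsum_prod']
          rfl
      _ = ∑' (l : List S) (q : A × S), M.pathProb s (block l q) := by
          simp only [pathProb_block_append, ENNReal.tsum_mul_left, ih, mul_one]
      _ = 1 := hblock s

end HMMeps

open HMMeps in
/-- If from every state there is a path of non-zero probability that
contains an observable symbol, then the probability space is well-defined:
for every start state `s₀` and every `n`, `∑_{z̃ ∈ Ωⁿ_{s₀}} Pⁿ_{s₀}(z̃) = 1`. -/
theorem omega_tsum_pathProb_eq_one {S A : Type*} [Fintype S] [Fintype A]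
    (M : HMMeps S A)
    (hreach : ∀ s : S, ∃ z : List (Option A × S),
      0 < M.pathProb s z ∧ ∃ p ∈ z, (Prod.fst p).isSome = true)
    (s₀ : S) (n : ℕ) :
    ∑' z : Omega S A n, M.pathProb s₀ z.1 = 1 := by
  have htend := M.tendsto_epsProb_zero fun s => M.exists_epsProb_lt_one (hreach s)
  refine M.tsum_Omega_pathProb_eq_one_of_blocks (fun s => ?_) n s₀
  rw [M.tsum_pathProb_block, M.tsum_firstObsProb_eq_one (htend s)]
end

section
/- Fix an observation symbol a ∈ Σ and states s₀, s ∈ S, and define Êᵃ_{s₀,s} = max over z̃ ∈ Ω¹_{s₀} with last state L(z̃) = s of P¹_{s₀}(z̃) restricted to sequences whose observable projection is a. Then Êᵃ_{s₀,s} satisfies the fixpoint equation Êᵃ_{s₀,s} = max( δ(s₀)(a, s), max_{s' ∈ S} δ(s₀)(ε, s') · Êᵃ_{s',s} ). -/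
/-! Split a path of `Ω¹` on its first step. If that step is observable it is also the last one,
since only one symbol is seen and a path cannot end in an ε-step; if it is an ε-step to `s'`,
the rest is a path of the same kind from `s'`, and every such path arises this way. -/

open scoped ENNReal

namespace HMMeps

/-- `Êᵃ_{s₀,s}`: the maximal probability of a sequence in `Ω¹_{s₀}` with observable
projection `a` and last state `s`. -/
noncomputable def Ehat {S A : Type*} [Fintype S] [Fintype A]
    (M : HMMeps S A) (a : A) (s₀ s : S) : ℝ≥0∞ :=
  ⨆ z : {z : List (Option A × S) //
      z ∈ Omega S A 1 ∧ obsSeq z = [a] ∧ lastState s₀ z = s},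
    M.pathProb s₀ z.1

section

variable {S A : Type*}

theorem lastState_cons (s₀ : S) (p : Option A × S) (z : List (Option A × S)) :
    lastState s₀ (p :: z) = lastState p.2 z := by
  cases z <;> simp [lastState, List.getLast?_cons]

theorem eq_nil_of_obsSeq_eq_nil {z : List (Option A × S)}
    (hlast : ∀ p ∈ z.getLast?, p.1.isSome = true) (hz : obsSeq z = []) : z = [] := by
  by_contra hne
  have hnone := List.filterMap_eq_nil_iff.1 hz _ (List.getLast_mem hne)
  simpa [hnone] using hlast _ (List.getLast?_eq_some_getLast hne)

theorem cons_none_mem_Omega_iff {n : ℕ} (t : S) (z : List (Option A × S)) :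
    (none, t) :: z ∈ Omega S A n ↔ z ∈ Omega S A n ∧ z ≠ [] := by
  cases z <;> simp [Omega, obsSeq, List.getLast?_cons_cons]

def IsObsPath (a : A) (s₀ s : S) (z : List (Option A × S)) : Prop :=
  z ∈ Omega S A 1 ∧ obsSeq z = [a] ∧ lastState s₀ z = s

variable {a : A} {s₀ s : S}

theorem isObsPath_singleton : IsObsPath a s₀ s [(some a, s)] := by
  simp [IsObsPath, Omega, obsSeq, lastState]

theorem IsObsPath.ne_nil {z : List (Option A × S)} (h : IsObsPath a s₀ s z) : z ≠ [] := by
  rintro rfl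
  simp [IsObsPath, obsSeq] at h

theorem isObsPath_cons_none_iff {t : S} {z : List (Option A × S)} :
    IsObsPath a s₀ s ((none, t) :: z) ↔ IsObsPath a t s z := by
  have hobs : obsSeq ((none, t) :: z) = obsSeq z := rfl
  rw [IsObsPath, IsObsPath, cons_none_mem_Omega_iff, hobs, lastState_cons]
  exact ⟨fun ⟨⟨hΩ, _⟩, h⟩ => ⟨hΩ, h⟩, fun h => ⟨⟨h.1, IsObsPath.ne_nil h⟩, h.2⟩⟩

theorem IsObsPath.of_cons_some {b : A} {t : S} {z : List (Option A × S)}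
    (h : IsObsPath a s₀ s ((some b, t) :: z)) : b = a ∧ z = [] ∧ t = s := by
  obtain ⟨⟨-, hlast⟩, hobs, hL⟩ := h
  obtain ⟨rfl, hz⟩ := List.cons.inj (hobs : b :: obsSeq z = [a])
  have hnil : z = [] := eq_nil_of_obsSeq_eq_nil
    (fun p hp => hlast p (by rw [List.getLast?_cons, Option.mem_def.1 hp]; rfl)) hz
  subst hnil
  exact ⟨rfl, rfl, by simpa [lastState] using hL⟩

end

section

variable {S A : Type*} [Fintype S] [Fintype A] (M : HMMeps S A) {a : A} {s₀ s : S}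

theorem le_Ehat_of_isObsPath {z : List (Option A × S)} (h : IsObsPath a s₀ s z) :
    M.pathProb s₀ z ≤ M.Ehat a s₀ s :=
  le_iSup_of_le ⟨z, h⟩ le_rfl

theorem δ_le_Ehat : M.δ s₀ (some a, s) ≤ M.Ehat a s₀ s := by
  simpa [pathProb] using M.le_Ehat_of_isObsPath (s₀ := s₀) isObsPath_singleton

theorem δ_none_mul_Ehat_le (t : S) : M.δ s₀ (none, t) * M.Ehat a t s ≤ M.Ehat a s₀ s := by
  rw [Ehat, ENNReal.mul_iSup]
  exact iSup_le fun z => M.le_Ehat_of_isObsPath (isObsPath_cons_none_iff.2 z.2)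

theorem pathProb_le_of_isObsPath {z : List (Option A × S)} (h : IsObsPath a s₀ s z) :
    M.pathProb s₀ z ≤ max (M.δ s₀ (some a, s)) (⨆ t : S, M.δ s₀ (none, t) * M.Ehat a t s) := by
  match z, h with
  | [], h => exact absurd rfl h.ne_nil
  | (some b, t) :: z, h =>
    obtain ⟨rfl, rfl, rfl⟩ := h.of_cons_some
    simp [pathProb]
  | (none, t) :: z, h =>
    calc M.pathProb s₀ ((none, t) :: z) = M.δ s₀ (none, t) * M.pathProb t z := rfl
      _ ≤ M.δ s₀ (none, t) * M.Ehat a t s := by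
        gcongr
        exact M.le_Ehat_of_isObsPath (isObsPath_cons_none_iff.1 h)
      _ ≤ ⨆ t' : S, M.δ s₀ (none, t') * M.Ehat a t' s :=
        le_iSup (fun t' => M.δ s₀ (none, t') * M.Ehat a t' s) t
      _ ≤ _ := le_max_right _ _

end

/-- `Êᵃ_{s₀,s}` satisfies the fixpoint equation
`Êᵃ_{s₀,s} = max( δ(s₀)(a,s) , max_{s'} δ(s₀)(ε,s')·Êᵃ_{s',s} )`. -/
theorem Ehat_fixpoint {S A : Type*} [Fintype S] [Fintype A]
    (M : HMMeps S A) (a : A) (s₀ s : S) :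
    Ehat M a s₀ s
      = max (M.δ s₀ (some a, s)) (⨆ s' : S, M.δ s₀ (none, s') * Ehat M a s' s) :=
  le_antisymm (iSup_le fun z => M.pathProb_le_of_isObsPath z.2)
    (max_le M.δ_le_Ehat (iSup_le fun t => M.δ_none_mul_Ehat_le t))

end HMMeps
end

section
/- Define P_{s₀}(Y = ỹ) = ∑_{z̃ ∈ Ωⁿ_{s₀}, Y(z̃) = ỹ} Pⁿ_{s₀}(z̃) for ỹ ∈ Σⁿ. Then P_{s₀}(Y = ε) = 1, and for ỹ = a₁ỹ₁ with a₁ ∈ Σ the fixpoint equation P_{s₀}(Y = ỹ) = ∑_{s₁ ∈ S} δ(s₀)(a₁, s₁) · P_{s₁}(Y = ỹ₁) + ∑_{s₁ ∈ S} δ(s₀)(ε, s₁) · P_{s₁}(Y = ỹ) holds. -/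
open scoped ENNReal

namespace HMMeps

/-- `P_{s₀}(Y = ỹ)`: the probability of observing `ỹ` starting from `s₀`, i.e.
the sum of the probabilities of all `z̃ ∈ Ωⁿ_{s₀}` (with `n = |ỹ|`) whose
observable projection is `ỹ`. -/
noncomputable def Pobs {S A : Type*} [Fintype S] [Fintype A]
    (M : HMMeps S A) (s₀ : S) (ys : List A) : ℝ≥0∞ :=
  ∑' z : {z : List (Option A × S) // z ∈ Omega S A ys.length ∧ obsSeq z = ys},
    M.pathProb s₀ z.1

/-! Conditioning on the first transition: a sequence emitting `a₁ỹ₁` is either an `ε`-step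
followed by a sequence emitting `a₁ỹ₁`, or an `a₁`-step followed by a sequence emitting `ỹ₁`.
Requiring the last step to be observable is what makes `[]` the only sequence emitting `ε`,
and excludes `[]` (and a trailing `ε`-step) once something is observed. -/

section Emission

variable {S A : Type*}

/-- The event `z̃ ∈ Ωⁿ_{s₀}, Y(z̃) = ỹ`, without the length constraint that `Y(z̃) = ỹ` implies. -/
def Emits (ys : List A) (z : List (Option A × S)) : Prop :=
  obsSeq z = ys ∧ ∀ p ∈ z.getLast?, p.1.isSome = true

theorem mem_Omega_and_obsSeq_eq_iff (ys : List A) (z : List (Option A × S)) :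
    z ∈ Omega S A ys.length ∧ obsSeq z = ys ↔ Emits ys z :=
  ⟨fun ⟨⟨_, hlast⟩, hobs⟩ => ⟨hobs, hlast⟩, fun ⟨hobs, hlast⟩ => ⟨⟨hobs ▸ rfl, hlast⟩, hobs⟩⟩

theorem emits_nil_iff (z : List (Option A × S)) : Emits [] z ↔ z = [] := by
  refine ⟨fun ⟨hobs, hlast⟩ => ?_, fun hz => by simp [hz, Emits, obsSeq]⟩
  by_contra hz
  have hsilent := List.filterMap_eq_nil_iff.mp hobs _ (List.getLast_mem hz)
  simpa [hsilent] using hlast _ (List.getLast?_eq_some_getLast hz)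

theorem not_emits_cons_nil (a : A) (y : List A) : ¬ Emits (S := S) (a :: y) [] := by
  simp [Emits, obsSeq]

theorem emits_cons_none_cons (a : A) (y : List A) (s : S) (z : List (Option A × S)) :
    Emits (a :: y) ((none, s) :: z) ↔ Emits (a :: y) z := by
  cases z with
  | nil => simp [Emits, obsSeq]
  | cons p z => simp [Emits, obsSeq, List.getLast?_cons_cons]

theorem emits_cons_some_cons (a b : A) (y : List A) (s : S) (z : List (Option A × S)) :
    Emits (a :: y) ((some b, s) :: z) ↔ b = a ∧ Emits y z := by
  cases z with
  | nil => simp [Emits, obsSeq]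
  | cons p z => simp [Emits, obsSeq, List.getLast?_cons_cons, and_assoc]

end Emission

theorem tsum_cons_eq_tsum_of_nil_eq_zero {α M : Type*} [AddCommMonoid M] [TopologicalSpace M]
    {f : List α → M} (hf : f [] = 0) :
    ∑' p : α × List α, f (p.1 :: p.2) = ∑' l, f l := by
  refine Function.Injective.tsum_eq (fun p q h => ?_) fun l hl => ?_
  · simpa [Prod.ext_iff] using h
  · cases l with
    | nil => exact absurd hf hl
    | cons a l => exact ⟨(a, l), rfl⟩

section Pobs

variable {S A : Type*} [Fintype S] [Fintype A] (M : HMMeps S A)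

theorem Pobs_eq_tsum_indicator (s : S) (ys : List A) :
    Pobs M s ys = ∑' z, {z | Emits ys z}.indicator (M.pathProb s) z := by
  have hset : {z | z ∈ Omega S A ys.length ∧ obsSeq z = ys} = {z | Emits ys z} :=
    Set.ext (mem_Omega_and_obsSeq_eq_iff ys)
  change ∑' z : ↥{z | z ∈ Omega S A ys.length ∧ obsSeq z = ys}, M.pathProb s z = _
  rw [hset, tsum_subtype]

theorem Pobs_nil (s : S) : Pobs M s [] = 1 := by
  have hset : {z : List (Option A × S) | Emits [] z} = {[]} := Set.ext emits_nil_iff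
  rw [Pobs_eq_tsum_indicator, ← tsum_subtype, hset, tsum_singleton]
  rfl

theorem indicator_pathProb_cons (s : S) (ys : List A) (p : Option A × S)
    (z : List (Option A × S)) :
    {z | Emits ys z}.indicator (M.pathProb s) (p :: z)
      = M.δ s p * {z | Emits ys (p :: z)}.indicator (M.pathProb p.2) z := by
  by_cases h : Emits ys (p :: z) <;> simp [h, pathProb]

theorem Pobs_cons_eq_sum (s : S) (a : A) (y : List A) :
    Pobs M s (a :: y)
      = ∑ p, M.δ s p * ∑' z, {z | Emits (a :: y) (p :: z)}.indicator (M.pathProb p.2) z := by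
  rw [Pobs_eq_tsum_indicator, ← tsum_cons_eq_tsum_of_nil_eq_zero (by simp [not_emits_cons_nil]),
    ENNReal.tsum_prod', tsum_fintype]
  simp only [indicator_pathProb_cons, ENNReal.tsum_mul_left]

end Pobs

/-- `P_{s₀}(Y = ε) = 1` and, for `ỹ = a₁ỹ₁`, the fixpoint equation
`P_{s₀}(Y=ỹ) = ∑_{s₁} δ(s₀)(a₁,s₁)·P_{s₁}(Y=ỹ₁) + ∑_{s₁} δ(s₀)(ε,s₁)·P_{s₁}(Y=ỹ)`
holds. -/
theorem Pobs_recursion {S A : Type*} [Fintype S] [Fintype A]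
    (M : HMMeps S A) (s₀ : S) (a₁ : A) (y₁ : List A) :
    Pobs M s₀ [] = 1 ∧
    Pobs M s₀ (a₁ :: y₁)
      = (∑ s₁ : S, M.δ s₀ (some a₁, s₁) * Pobs M s₁ y₁)
        + ∑ s₁ : S, M.δ s₀ (none, s₁) * Pobs M s₁ (a₁ :: y₁) := by
  refine ⟨Pobs_nil M s₀, ?_⟩
  have hmismatch : ∀ b ≠ a₁, ∑ s₁ : S, M.δ s₀ (some b, s₁) *
      ∑' z, {z | Emits (a₁ :: y₁) ((some b, s₁) :: z)}.indicator (M.pathProb s₁) z = 0 := by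
    intro b hb
    simp [emits_cons_some_cons, hb]
  rw [Pobs_cons_eq_sum, Fintype.sum_prod_type, Fintype.sum_option,
    Fintype.sum_eq_single a₁ hmismatch, add_comm]
  simp only [emits_cons_none_cons, emits_cons_some_cons, true_and, ← Pobs_eq_tsum_indicator]
end HMMeps
end

section
/- Fix an observation sequence ỹ = a₁ỹ₁ ∈ Σⁿ (n ≥ 1) and a transition 𝗍 = (s, a, s') with a ∈ Σ. Define C^{ỹ}_{s₀,𝗍} = ∑_{z̃ ∈ Ωⁿ_{s₀}, Y(z̃) = ỹ} X_𝗍(z̃) · Pⁿ_{s₀}(z̃), where X_𝗍(z̃) counts the occurrences of the transition 𝗍 in z̃ (equivalently, C^{ỹ}_{s₀,𝗍} = E_{s₀}[X_𝗍 | Y = ỹ] · P_{s₀}(Y = ỹ) when P_{s₀}(Y = ỹ) > 0). Then C^{ε}_{s₀,𝗍} = 0 and C^{ỹ}_{s₀,𝗍} = ∑_{s₁ ∈ S} δ(s₀)(a₁, s₁) · C^{ỹ₁}_{s₁,𝗍} + ∑_{s₁ ∈ S} δ(s₀)(ε, s₁) · C^{ỹ}_{s₁,𝗍} + [s₀ =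 s ∧ a₁ = a] · δ(s)(a, s') · P_{s'}(Y = ỹ₁), where [b] = 1 if b holds and 0 otherwise. -/
open scoped ENNReal

namespace HMMeps

/-- `X_𝗍`: the number of occurrences of the transition `𝗍 = (s, a, s')` in the
sequence starting in the given state with the given list of steps. -/
def countTrans {S A : Type*} [DecidableEq S] [DecidableEq A]
    (t : S × (Option A × S)) : S → List (Option A × S) → ℕ
  | _, [] => 0
  | s, p :: rest => (if (s, p) = t then 1 else 0) + countTrans t p.2 rest

/-- `C^{ỹ}_{s₀,𝗍} = ∑_{z̃ ∈ Ωⁿ_{s₀}, Y(z̃)=ỹ} X_𝗍(z̃)·Pⁿ_{s₀}(z̃)`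
(equivalently `E_{s₀}[X_𝗍 ∣ Y=ỹ]·P_{s₀}(Y=ỹ)` when `P_{s₀}(Y=ỹ) > 0`). -/
noncomputable def Cexp {S A : Type*} [Fintype S] [Fintype A]
    [DecidableEq S] [DecidableEq A]
    (M : HMMeps S A) (s₀ : S) (ys : List A) (t : S × (Option A × S)) : ℝ≥0∞ :=
  ∑' z : {z : List (Option A × S) // z ∈ Omega S A ys.length ∧ obsSeq z = ys},
    (countTrans t s₀ z.1 : ℝ≥0∞) * M.pathProb s₀ z.1


section Aux

variable {S A : Type*} [Fintype S] [Fintype A]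

open Classical

/-- Convenient membership predicate for the sample space with observation `ys`. -/
def Good (ys : List A) (z : List (Option A × S)) : Prop :=
  obsSeq z = ys ∧ ∀ p ∈ z.getLast?, (Prod.fst p).isSome = true

lemma mem_iff_good (ys : List A) (z : List (Option A × S)) :
    (z ∈ Omega S A ys.length ∧ obsSeq z = ys) ↔ Good ys z := by
  constructor
  · rintro ⟨⟨h1, h2⟩, h3⟩; exact ⟨h3, h2⟩
  · rintro ⟨h1, h2⟩; exact ⟨⟨by rw [h1], h2⟩, h1⟩

lemma tsum_list (f : List (Option A × S) → ℝ≥0∞) :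
    ∑' z, f z = f [] + ∑ p : Option A × S, ∑' r, f (p :: r) := by
  have h := Summable.tsum_add_tsum_compl (s := ({[]} : Set (List (Option A × S)))) (f := f)
    ENNReal.summable ENNReal.summable
  rw [← h, tsum_singleton]
  congr 1
  let e : (Option A × S) × List (Option A × S) ≃
      ↥(({[]} : Set (List (Option A × S)))ᶜ) :=
    Equiv.ofBijective (fun q => ⟨q.1 :: q.2, by simp⟩)
      ⟨by
        rintro ⟨p, r⟩ ⟨p', r'⟩ hq
        simp only [Subtype.mk.injEq, List.cons.injEq] at hq
        exact Prod.ext hq.1 hq.2,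
       by
        rintro ⟨z, hz⟩
        match z with
        | [] => simp at hz
        | p :: r => exact ⟨(p, r), rfl⟩⟩
  rw [← Equiv.tsum_eq e (fun z => f z.1), ENNReal.tsum_prod', tsum_fintype]
  exact Finset.sum_congr rfl fun p _ => tsum_congr fun r => rfl

lemma Cexp_eq [DecidableEq S] [DecidableEq A] (M : HMMeps S A) (s₀ : S) (ys : List A)
    (t : S × (Option A × S)) :
    Cexp M s₀ ys t = ∑' z : List (Option A × S),
      if Good ys z then (countTrans t s₀ z : ℝ≥0∞) * M.pathProb s₀ z else 0 := by
  refine Eq.trans (tsum_subtype ({z | z ∈ Omega S A ys.length ∧ obsSeq z = ys})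
    (fun z => (countTrans t s₀ z : ℝ≥0∞) * M.pathProb s₀ z)) ?_
  refine tsum_congr fun z => ?_
  simp only [Set.indicator_apply, Set.mem_setOf_eq, mem_iff_good]

lemma Pobs_eq (M : HMMeps S A) (s₀ : S) (ys : List A) :
    Pobs M s₀ ys = ∑' z : List (Option A × S),
      if Good ys z then M.pathProb s₀ z else 0 := by
  refine Eq.trans (tsum_subtype ({z | z ∈ Omega S A ys.length ∧ obsSeq z = ys})
    (fun z => M.pathProb s₀ z)) ?_
  refine tsum_congr fun z => ?_
  simp only [Set.indicator_apply, Set.mem_setOf_eq, mem_iff_good]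

lemma good_nil_iff (ys : List A) : Good ys ([] : List (Option A × S)) ↔ ys = [] := by
  constructor
  · rintro ⟨h, _⟩; exact h.symm
  · rintro rfl; exact ⟨rfl, by simp⟩

lemma good_elem_nil_iff (z : List (Option A × S)) : Good ([] : List A) z ↔ z = [] := by
  constructor
  · rintro ⟨h1, h2⟩
    match z with
    | [] => rfl
    | p :: r =>
      exfalso
      have hne : (p :: r : List (Option A × S)) ≠ [] := by simp
      set q := (p :: r).getLast hne with hqdef
      have hq : (p :: r).getLast? = some q := List.getLast?_eq_getLast_of_ne_nil hne
      have hqmem : q ∈ p :: r := List.getLast_mem hne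
      have hsome := h2 q (by simp [hq])
      have hnone : q.1 = none := by
        have := List.filterMap_eq_nil_iff.mp h1 q hqmem
        simpa using this
      rw [hnone] at hsome; simp at hsome
  · rintro rfl; exact ⟨rfl, by simp⟩

lemma good_cons_some (b : A) (s₁ : S) (r : List (Option A × S)) (a₁ : A) (y₁ : List A) :
    Good (a₁ :: y₁) ((some b, s₁) :: r) ↔ b = a₁ ∧ Good y₁ r := by
  match r with
  | [] =>
    simp [Good, obsSeq]
  | q :: r' =>
    simp only [Good, obsSeq, List.filterMap_cons]
    simp only [List.getLast?_cons_cons]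
    constructor
    · rintro ⟨h1, h2⟩
      simp only [List.cons.injEq] at h1
      exact ⟨h1.1, h1.2, h2⟩
    · rintro ⟨rfl, h1, h2⟩
      exact ⟨by rw [h1], h2⟩

lemma good_cons_none (s₁ : S) (r : List (Option A × S)) (a₁ : A) (y₁ : List A) :
    Good (a₁ :: y₁) ((none, s₁) :: r) ↔ Good (a₁ :: y₁) r := by
  match r with
  | [] =>
    simp [Good, obsSeq]
  | q :: r' =>
    simp only [Good, obsSeq, List.filterMap_cons]
    simp only [List.getLast?_cons_cons]

end Aux

/-- For a transition `𝗍 = (s, a, s')` with observable label `a ∈ Σ`: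
`C^{ε}_{s₀,𝗍} = 0` and, for `ỹ = a₁ỹ₁`,
`C^{ỹ}_{s₀,𝗍} = ∑_{s₁} δ(s₀)(a₁,s₁)·C^{ỹ₁}_{s₁,𝗍} + ∑_{s₁} δ(s₀)(ε,s₁)·C^{ỹ}_{s₁,𝗍}
 + [s₀=s ∧ a₁=a]·δ(s)(a,s')·P_{s'}(Y=ỹ₁)`. -/
theorem Cexp_recursion_obs {S A : Type*} [Fintype S] [Fintype A]
    [DecidableEq S] [DecidableEq A]
    (M : HMMeps S A) (s₀ : S) (a₁ : A) (y₁ : List A) (s : S) (a : A) (s' : S) :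
    Cexp M s₀ [] (s, (some a, s')) = 0 ∧
    Cexp M s₀ (a₁ :: y₁) (s, (some a, s'))
      = (∑ s₁ : S, M.δ s₀ (some a₁, s₁) * Cexp M s₁ y₁ (s, (some a, s')))
        + (∑ s₁ : S, M.δ s₀ (none, s₁) * Cexp M s₁ (a₁ :: y₁) (s, (some a, s')))
        + (if s₀ = s ∧ a₁ = a then 1 else 0) * M.δ s (some a, s') * Pobs M s' y₁ := by
  classical
  constructor
  · rw [Cexp_eq, ENNReal.tsum_eq_zero]
    intro z
    by_cases h : Good ([] : List A) z
    · rw [good_elem_nil_iff] at h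
      subst h
      simp [countTrans]
    · simp [h]
  · have hnone : ∀ s₁ : S,
        (∑' r, if Good (a₁ :: y₁) ((none, s₁) :: r)
            then (countTrans (s, (some a, s')) s₀ ((none, s₁) :: r) : ℝ≥0∞)
                  * M.pathProb s₀ ((none, s₁) :: r) else 0)
          = M.δ s₀ (none, s₁) * Cexp M s₁ (a₁ :: y₁) (s, (some a, s')) := by
      intro s₁
      rw [Cexp_eq, ← ENNReal.tsum_mul_left]
      refine tsum_congr fun r => ?_
      by_cases h : Good (a₁ :: y₁) r
      · rw [if_pos ((good_cons_none s₁ r a₁ y₁).mpr h), if_pos h]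
        have hc : countTrans (s, (some a, s')) s₀ ((none, s₁) :: r)
            = countTrans (s, (some a, s')) s₁ r := by
          simp [countTrans]
        rw [hc]
        simp only [pathProb]
        ring
      · rw [if_neg (fun hh => h ((good_cons_none s₁ r a₁ y₁).mp hh)), if_neg h, mul_zero]
    have hsome : ∀ s₁ : S,
        (∑' r, if Good (a₁ :: y₁) ((some a₁, s₁) :: r)
            then (countTrans (s, (some a, s')) s₀ ((some a₁, s₁) :: r) : ℝ≥0∞)
                  * M.pathProb s₀ ((some a₁, s₁) :: r) else 0)
          = M.δ s₀ (some a₁, s₁) * Cexp M s₁ y₁ (s, (some a, s'))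
            + (if (s₀, ((some a₁ : Option A), s₁)) = (s, (some a, s')) then (1:ℝ≥0∞) else 0)
              * M.δ s₀ (some a₁, s₁) * Pobs M s₁ y₁ := by
      intro s₁
      rw [Cexp_eq, Pobs_eq, ← ENNReal.tsum_mul_left, mul_assoc, ← ENNReal.tsum_mul_left, ← ENNReal.tsum_mul_left,
        ← ENNReal.tsum_add]
      refine tsum_congr fun r => ?_
      by_cases h : Good y₁ r
      · rw [if_pos ((good_cons_some a₁ s₁ r a₁ y₁).mpr ⟨rfl, h⟩), if_pos h, if_pos h]
        simp only [countTrans, pathProb, Nat.cast_add]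
        by_cases hc : (s₀, ((some a₁ : Option A), s₁)) = (s, (some a, s'))
        · rw [if_pos hc, if_pos hc]
          push_cast
          ring
        · rw [if_neg hc, if_neg hc]
          push_cast
          ring
      · rw [if_neg (fun hh => h ((good_cons_some a₁ s₁ r a₁ y₁).mp hh).2), if_neg h, if_neg h]
        simp
    rw [Cexp_eq, tsum_list]
    have h0 : ¬ Good (a₁ :: y₁) ([] : List (Option A × S)) := by
      rw [good_nil_iff]; simp
    rw [if_neg h0, zero_add, Fintype.sum_prod_type, Fintype.sum_option]
    have hb : (∑ b : A, ∑ s₁ : S, ∑' r,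
          if Good (a₁ :: y₁) ((some b, s₁) :: r)
            then (countTrans (s, (some a, s')) s₀ ((some b, s₁) :: r) : ℝ≥0∞)
                  * M.pathProb s₀ ((some b, s₁) :: r) else 0)
        = ∑ s₁ : S, ∑' r,
          if Good (a₁ :: y₁) ((some a₁, s₁) :: r)
            then (countTrans (s, (some a, s')) s₀ ((some a₁, s₁) :: r) : ℝ≥0∞)
                  * M.pathProb s₀ ((some a₁, s₁) :: r) else 0 := by
      refine Finset.sum_eq_single a₁ ?_ (by simp)
      intro b _ hb
      refine Finset.sum_eq_zero fun s₁ _ => ?_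
      rw [ENNReal.tsum_eq_zero]
      intro r
      rw [if_neg]
      intro hg
      exact hb ((good_cons_some b s₁ r a₁ y₁).mp hg).1
    simp only [hnone]
    rw [hb]
    simp only [hsome]
    rw [Finset.sum_add_distrib]
    have hind : (∑ s₁ : S, (if (s₀, ((some a₁ : Option A), s₁)) = (s, (some a, s'))
            then (1:ℝ≥0∞) else 0) * M.δ s₀ (some a₁, s₁) * Pobs M s₁ y₁)
        = (if s₀ = s ∧ a₁ = a then 1 else 0) * M.δ s (some a, s') * Pobs M s' y₁ := by
      simp only [Prod.mk.injEq, Option.some.injEq]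
      by_cases hc : s₀ = s ∧ a₁ = a
      · obtain ⟨rfl, rfl⟩ := hc
        rw [if_pos ⟨rfl, rfl⟩, one_mul]
        rw [Finset.sum_eq_single s' ?_ (by simp)]
        · rw [if_pos ⟨rfl, rfl, rfl⟩, one_mul]
        · intro s₁ _ hs₁
          rw [if_neg (fun h => hs₁ h.2.2), zero_mul, zero_mul]
      · rw [if_neg hc, zero_mul, zero_mul]
        refine Finset.sum_eq_zero fun s₁ _ => ?_
        rw [if_neg (fun h => hc ⟨h.1, h.2.1⟩), zero_mul, zero_mul]
    rw [hind]
    ring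

end HMMeps
end

section
/- Fix an observation sequence ỹ = a₁ỹ₁ ∈ Σⁿ (n ≥ 1) and an ε-transition 𝗍 = (s, ε, s'). Define C^{ỹ}_{s₀,𝗍} = ∑_{z̃ ∈ Ωⁿ_{s₀}, Y(z̃) = ỹ} X_𝗍(z̃) · Pⁿ_{s₀}(z̃). Then C^{ε}_{s₀,𝗍} = 0 and C^{ỹ}_{s₀,𝗍} = ∑_{s₁ ∈ S} δ(s₀)(a₁, s₁) · C^{ỹ₁}_{s₁,𝗍} + ∑_{s₁ ∈ S} δ(s₀)(ε, s₁) · C^{ỹ}_{s₁,𝗍} + [s₀ = s] · δ(s)(ε, s') · P_{s'}(Y = ỹ), where [b] = 1 if b holds and 0 otherwise. -/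
/-!
A path observing `a₁ỹ₁` starts either with an `a₁`-step, followed by a path observing `ỹ₁`,
or with an ε-step, followed by a path observing `a₁ỹ₁`; this splits the sum defining `C`
along the first step `(s₀, p)`. The probability of the path factors as `δ(s₀)(p)` times that
of the rest, and `X_𝗍` is the count on the rest plus `[(s₀, p) = 𝗍]`. The count on the rest
contributes `δ(s₀)(p) · C` of the rest; the indicator survives only when the first step is `𝗍`
itself and contributes `δ(s)(ε, s') · P_{s'}(Y = ỹ)`.
-/

open scoped ENNReal

namespace HMMeps

def obsPaths (S : Type*) {A : Type*} (ys : List A) : Set (List (Option A × S)) :=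
  {z | z ∈ Omega S A ys.length ∧ obsSeq z = ys}

section Decomposition

variable {S A : Type*}

theorem mem_obsPaths {ys : List A} {z : List (Option A × S)} :
    z ∈ obsPaths S ys ↔ obsSeq z = ys ∧ ∀ p ∈ z.getLast?, p.1.isSome = true := by
  constructor
  · rintro ⟨⟨-, hlast⟩, hobs⟩
    exact ⟨hobs, hlast⟩
  · rintro ⟨hobs, hlast⟩
    exact ⟨⟨congrArg List.length hobs, hlast⟩, hobs⟩

theorem mem_obsPaths_nil {z : List (Option A × S)} : z ∈ obsPaths S [] ↔ z = [] := by
  refine ⟨fun hz => ?_, fun hz => by simp [hz, mem_obsPaths, obsSeq]⟩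
  obtain ⟨hobs, hlast⟩ := mem_obsPaths.mp hz
  by_contra hne
  obtain ⟨p, hp⟩ := Option.ne_none_iff_exists'.mp (List.getLast?_eq_none_iff.not.mpr hne)
  have hp_none : p.1 = none :=
    (List.filterMap_eq_nil_iff.mp hobs) p (List.mem_of_getLast? hp)
  simpa [hp_none] using hlast p hp

theorem cons_mem_obsPaths_cons {a : A} {y : List A} {p : Option A × S}
    {r : List (Option A × S)} :
    p :: r ∈ obsPaths S (a :: y) ↔
      (p.1 = some a ∧ r ∈ obsPaths S y) ∨ (p.1 = none ∧ r ∈ obsPaths S (a :: y)) := by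
  obtain ⟨b, s₁⟩ := p
  rcases r with _ | ⟨q, r⟩ <;> cases b <;>
    simp [mem_obsPaths, obsSeq, List.getLast?_cons_cons, and_assoc]

def consObsPath (a : A) (y : List A) :
    (S × obsPaths S y) ⊕ (S × obsPaths S (a :: y)) → obsPaths S (a :: y)
  | .inl (s₁, r) => ⟨(some a, s₁) :: r, cons_mem_obsPaths_cons.mpr (.inl ⟨rfl, r.2⟩)⟩
  | .inr (s₁, r) => ⟨(none, s₁) :: r, cons_mem_obsPaths_cons.mpr (.inr ⟨rfl, r.2⟩)⟩

theorem consObsPath_bijective (a : A) (y : List A) :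
    Function.Bijective (consObsPath (S := S) a y) := by
  constructor
  · rintro (⟨s₁, r₁⟩ | ⟨s₁, r₁⟩) (⟨s₂, r₂⟩ | ⟨s₂, r₂⟩) h <;>
      simp_all [consObsPath, Subtype.ext_iff]
  · rintro ⟨_ | ⟨⟨b, s₁⟩, r⟩, hz⟩
    · simp [mem_obsPaths, obsSeq] at hz
    · rcases cons_mem_obsPaths_cons.mp hz with ⟨hb, hr⟩ | ⟨hb, hr⟩ <;> dsimp only at hb <;>
        subst hb
      exacts [⟨.inl (s₁, ⟨r, hr⟩), rfl⟩, ⟨.inr (s₁, ⟨r, hr⟩), rfl⟩]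

variable [Fintype S]

theorem tsum_obsPaths_cons (a : A) (y : List A) (F : List (Option A × S) → ℝ≥0∞) :
    ∑' z : obsPaths S (a :: y), F z =
      ∑ s₁, ∑' r : obsPaths S y, F ((some a, s₁) :: r) +
        ∑ s₁, ∑' r : obsPaths S (a :: y), F ((none, s₁) :: r) := by
  rw [← (Equiv.ofBijective _ (consObsPath_bijective a y)).tsum_eq,
    ENNReal.summable.tsum_sum ENNReal.summable, ENNReal.tsum_prod', ENNReal.tsum_prod',
    tsum_fintype, tsum_fintype]
  rfl

end Decomposition

section Recursion

variable {S A : Type*} [Fintype S] [Fintype A] (M : HMMeps S A)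

theorem Pobs_eq_tsum_obsPaths (s₀ : S) (ys : List A) :
    Pobs M s₀ ys = ∑' z : obsPaths S ys, M.pathProb s₀ z :=
  rfl

variable [DecidableEq S] [DecidableEq A]

theorem Cexp_eq_tsum_obsPaths (s₀ : S) (ys : List A) (t : S × (Option A × S)) :
    Cexp M s₀ ys t = ∑' z : obsPaths S ys, (countTrans t s₀ z : ℝ≥0∞) * M.pathProb s₀ z :=
  rfl

theorem Cexp_nil (s₀ : S) (t : S × (Option A × S)) : Cexp M s₀ [] t = 0 := by
  rw [Cexp_eq_tsum_obsPaths, ENNReal.tsum_eq_zero]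
  rintro ⟨z, hz⟩
  obtain rfl := mem_obsPaths_nil.mp hz
  simp [countTrans]

theorem tsum_countTrans_mul_pathProb_cons (s₀ : S) (p : Option A × S) (ys : List A)
    (t : S × (Option A × S)) :
    ∑' r : obsPaths S ys, (countTrans t s₀ (p :: r) : ℝ≥0∞) * M.pathProb s₀ (p :: r) =
      M.δ s₀ p * Cexp M p.2 ys t + if (s₀, p) = t then M.δ s₀ p * Pobs M p.2 ys else 0 := by
  have hstep : ∀ r, (countTrans t s₀ (p :: r) : ℝ≥0∞) * M.pathProb s₀ (p :: r) =
      M.δ s₀ p * ((countTrans t p.2 r : ℝ≥0∞) * M.pathProb p.2 r) +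
        if (s₀, p) = t then M.δ s₀ p * M.pathProb p.2 r else 0 := by
    intro r
    split_ifs <;> simp [countTrans, pathProb, *] <;> ring
  simp_rw [hstep]
  rw [ENNReal.tsum_add, ENNReal.tsum_mul_left, Cexp_eq_tsum_obsPaths]
  split_ifs
  · rw [ENNReal.tsum_mul_left, Pobs_eq_tsum_obsPaths]
  · simp

theorem Cexp_cons (s₀ : S) (a : A) (y : List A) (t : S × (Option A × S)) :
    Cexp M s₀ (a :: y) t =
      ∑ s₁, (M.δ s₀ (some a, s₁) * Cexp M s₁ y t +
          if (s₀, (some a, s₁)) = t then M.δ s₀ (some a, s₁) * Pobs M s₁ y else 0) +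
        ∑ s₁, (M.δ s₀ (none, s₁) * Cexp M s₁ (a :: y) t +
          if (s₀, (none, s₁)) = t then M.δ s₀ (none, s₁) * Pobs M s₁ (a :: y) else 0) := by
  rw [Cexp_eq_tsum_obsPaths,
    tsum_obsPaths_cons (F := fun z => (countTrans t s₀ z : ℝ≥0∞) * M.pathProb s₀ z)]
  simp only [tsum_countTrans_mul_pathProb_cons]

end Recursion

/-- For an ε-transition `𝗍 = (s, ε, s')`:
`C^{ε}_{s₀,𝗍} = 0` and, for `ỹ = a₁ỹ₁`,
`C^{ỹ}_{s₀,𝗍} = ∑_{s₁} δ(s₀)(a₁,s₁)·C^{ỹ₁}_{s₁,𝗍} + ∑_{s₁} δ(s₀)(ε,s₁)·C^{ỹ}_{s₁,𝗍}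
 + [s₀=s]·δ(s)(ε,s')·P_{s'}(Y=ỹ)`. -/
theorem Cexp_recursion_eps {S A : Type*} [Fintype S] [Fintype A]
    [DecidableEq S] [DecidableEq A]
    (M : HMMeps S A) (s₀ : S) (a₁ : A) (y₁ : List A) (s s' : S) :
    Cexp M s₀ [] (s, (none, s')) = 0 ∧
    Cexp M s₀ (a₁ :: y₁) (s, (none, s'))
      = (∑ s₁ : S, M.δ s₀ (some a₁, s₁) * Cexp M s₁ y₁ (s, (none, s')))
        + (∑ s₁ : S, M.δ s₀ (none, s₁) * Cexp M s₁ (a₁ :: y₁) (s, (none, s')))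
        + (if s₀ = s then 1 else 0) * M.δ s (none, s') * Pobs M s' (a₁ :: y₁) := by
  refine ⟨Cexp_nil M s₀ _, ?_⟩
  rw [Cexp_cons]
  simp only [Prod.mk.injEq, reduceCtorEq, false_and, and_false, if_false, add_zero,
    Finset.sum_add_distrib, add_assoc, ite_mul, one_mul, zero_mul]
  congr 2
  split_ifs with h <;> simp [h]

end HMMeps
end

section
/- Fix an HMM with ε-transitions with transition probabilities parameterized by θ, a start state s₀, and an observation sequence ỹ ∈ Σⁿ with P(Y = ỹ | θᵗ) > 0. Then Q(θ | θᵗ) = ∑_{s ∈ S} ∑_{𝗍 ∈ T^s_δ} log δ(𝗍 | θ) · E_{s₀}[X_𝗍 | Y = ỹ, θᵗ] is maximized over all admissible parameters θ (i.e., all choices of δ(·|θ) making each δ(s)(·|θ) a probability function on the outgoing transitions of s) by setting, for every state s whose outgoing conditional expectations are not all zero and every 𝗍 ∈ T^s_δ, δ(𝗍 | θ) = E_{s₀}[X_𝗍 | Y = ỹ, θᵗ] / ∑_{𝗍' ∈ T^s_δ} E_{s₀}[X_{𝗍'} | Y = ỹ, θᵗ]. -/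
open scoped ENNReal

/-!
`Q(θ ∣ θᵗ)` is a sum over states `s` of `∑_{𝗍 ∈ T^s_δ} log θ(𝗍) · E 𝗍`, and admissibility
constrains each state separately, so it suffices to maximize each summand on its own. For one
state this is Gibbs' inequality: with `W = ∑ E 𝗍`, the bound `log x ≤ x - 1` at
`x = θ(𝗍) W / E 𝗍` gives `(log θ(𝗍) - log (E 𝗍 / W)) E 𝗍 ≤ θ(𝗍) W - E 𝗍`, whose sum is
`≤ 0`. In `ℝ≥0∞`/`EReal` the transitions with `E 𝗍 = 0` contribute nothing, a zero
`θ(𝗍)` elsewhere makes the left side `⊥`, and the rest is the real inequality. Finiteness of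
`W` comes from admissibility of `θ⋆`: for `W = ⊤` it would vanish on all of `T^s_δ`.
-/

theorem EReal.coe_finset_sum {ι : Type*} (F : Finset ι) (f : ι → ℝ) :
    ((∑ i ∈ F, f i : ℝ) : EReal) = ∑ i ∈ F, (f i : EReal) :=
  map_sum (⟨⟨(↑), EReal.coe_zero⟩, EReal.coe_add⟩ : ℝ →+ EReal) f F

theorem ENNReal.sum_log_mul_eq_coe_sum_log_toReal_mul {ι : Type*} {F : Finset ι}
    {θ w : ι → ℝ≥0∞} (hθ₀ : ∀ i ∈ F, θ i ≠ 0) (hθ : ∀ i ∈ F, θ i ≠ ⊤) (hw : ∀ i ∈ F, w i ≠ ⊤) :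
    ∑ i ∈ F, ENNReal.log (θ i) * (w i : EReal)
      = ((∑ i ∈ F, Real.log (θ i).toReal * (w i).toReal : ℝ) : EReal) := by
  rw [EReal.coe_finset_sum]
  refine Finset.sum_congr rfl fun i hi => ?_
  rw [ENNReal.log_pos_real (hθ₀ i hi) (hθ i hi), ← EReal.coe_ennreal_toReal (hw i hi),
    EReal.coe_mul]

theorem Real.sum_log_mul_le_sum_log_div_sum_mul {ι : Type*} {F : Finset ι} {w θ : ι → ℝ}
    (hw : ∀ i ∈ F, 0 < w i) (hθ : ∀ i ∈ F, 0 < θ i) (hθ₁ : ∑ i ∈ F, θ i ≤ 1) :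
    ∑ i ∈ F, Real.log (θ i) * w i ≤ ∑ i ∈ F, Real.log (w i / ∑ j ∈ F, w j) * w i := by
  set W := ∑ j ∈ F, w j
  have hW : 0 ≤ W := Finset.sum_nonneg fun i hi => (hw i hi).le
  have hterm : ∀ i ∈ F, Real.log (θ i) * w i - Real.log (w i / W) * w i ≤ θ i * W - w i := by
    intro i hi
    have hwi := hw i hi
    have hWi : 0 < W := hwi.trans_le (Finset.single_le_sum (fun j hj => (hw j hj).le) hi)
    have hlog := Real.log_le_sub_one_of_pos (div_pos (hθ i hi) (div_pos hwi hWi))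
    rw [Real.log_div (hθ i hi).ne' (div_pos hwi hWi).ne'] at hlog
    calc Real.log (θ i) * w i - Real.log (w i / W) * w i
        = (Real.log (θ i) - Real.log (w i / W)) * w i := by ring
      _ ≤ (θ i / (w i / W) - 1) * w i := mul_le_mul_of_nonneg_right hlog hwi.le
      _ = θ i * W - w i := by field_simp
  rw [← sub_nonpos, ← Finset.sum_sub_distrib]
  calc ∑ i ∈ F, (Real.log (θ i) * w i - Real.log (w i / W) * w i)
      ≤ ∑ i ∈ F, (θ i * W - w i) := Finset.sum_le_sum hterm
    _ = (∑ i ∈ F, θ i) * W - W := by rw [Finset.sum_sub_distrib, ← Finset.sum_mul]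
    _ ≤ 0 := by nlinarith

theorem ENNReal.sum_log_mul_le_sum_log_div_sum_mul_of_ne_zero {ι : Type*} {F : Finset ι}
    {w θ : ι → ℝ≥0∞} (hw₀ : ∀ i ∈ F, w i ≠ 0) (hθ₁ : ∑ i ∈ F, θ i ≤ 1)
    (hw : ∑ j ∈ F, w j ≠ ⊤) :
    ∑ i ∈ F, ENNReal.log (θ i) * (w i : EReal)
      ≤ ∑ i ∈ F, ENNReal.log (w i / ∑ j ∈ F, w j) * (w i : EReal) := by
  set W := ∑ j ∈ F, w j
  have hw' : ∀ i ∈ F, w i ≠ ⊤ := ENNReal.sum_ne_top.1 hw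
  by_cases hθ₀ : ∃ i ∈ F, θ i = 0
  · obtain ⟨i, hi, h0⟩ := hθ₀
    have hbot : ∑ i ∈ F, ENNReal.log (θ i) * (w i : EReal) = ⊥ := by
      refine WithBot.sum_eq_bot_iff.2 ⟨i, hi, ?_⟩
      rw [h0, ENNReal.log_zero, EReal.bot_mul_of_pos (mod_cast pos_iff_ne_zero.2 (hw₀ i hi))]
      rfl
    exact hbot ▸ bot_le
  push Not at hθ₀
  have hθ : ∀ i ∈ F, θ i ≠ ⊤ := ENNReal.sum_ne_top.1 (ne_top_of_le_ne_top ENNReal.one_ne_top hθ₁)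
  have hwW : ∀ i ∈ F, w i ≤ W := fun i hi => Finset.single_le_sum (fun _ _ => zero_le) hi
  have hdiv₀ : ∀ i ∈ F, w i / W ≠ 0 := fun i hi => by simp [hw₀ i hi, hw]
  have hdiv : ∀ i ∈ F, w i / W ≠ ⊤ := fun i hi =>
    ENNReal.div_ne_top (hw' i hi) fun h => hw₀ i hi (nonpos_iff_eq_zero.1 (h ▸ hwW i hi))
  rw [ENNReal.sum_log_mul_eq_coe_sum_log_toReal_mul hθ₀ hθ hw',
    ENNReal.sum_log_mul_eq_coe_sum_log_toReal_mul hdiv₀ hdiv hw', EReal.coe_le_coe_iff]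
  simp_rw [ENNReal.toReal_div, W, ENNReal.toReal_sum hw']
  refine Real.sum_log_mul_le_sum_log_div_sum_mul
    (fun i hi => ENNReal.toReal_pos (hw₀ i hi) (hw' i hi))
    (fun i hi => ENNReal.toReal_pos (hθ₀ i hi) (hθ i hi)) ?_
  rw [← ENNReal.toReal_sum hθ]
  exact ENNReal.toReal_le_of_le_ofReal zero_le_one (by simpa using hθ₁)

theorem ENNReal.sum_log_mul_le_sum_log_div_sum_mul {ι : Type*} {F : Finset ι} {w θ : ι → ℝ≥0∞}
    (hθ₁ : ∑ i ∈ F, θ i ≤ 1) (hw : ∑ j ∈ F, w j ≠ ⊤) :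
    ∑ i ∈ F, ENNReal.log (θ i) * (w i : EReal)
      ≤ ∑ i ∈ F, ENNReal.log (w i / ∑ j ∈ F, w j) * (w i : EReal) := by
  classical
  set F' := F.filter (fun i => w i ≠ 0)
  have hrestrict : ∀ g : ι → ℝ≥0∞, ∑ i ∈ F, ENNReal.log (g i) * (w i : EReal)
      = ∑ i ∈ F', ENNReal.log (g i) * (w i : EReal) := fun g =>
    (Finset.sum_filter_of_ne fun i _ h => by contrapose! h; simp [h]).symm
  have hW : ∑ j ∈ F, w j = ∑ j ∈ F', w j := (Finset.sum_filter_of_ne fun i _ h => h).symm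
  rw [hrestrict, hrestrict, hW]
  exact ENNReal.sum_log_mul_le_sum_log_div_sum_mul_of_ne_zero
    (fun i hi => (Finset.mem_filter.1 hi).2)
    ((Finset.sum_le_sum_of_subset (Finset.filter_subset _ _)).trans hθ₁) (hW ▸ hw)

namespace HMMeps

theorem Q_maximized_by_normalized_expectations_general {S A : Type*} [Fintype S]
    [DecidableEq S]
    (Tstruct : Finset (S × (Option A × S)))
    (condE : S × (Option A × S) → ℝ≥0∞)
    (θstar : S × (Option A × S) → ℝ≥0∞)
    (hstar_adm : ∀ s : S, ∑ t ∈ Tstruct.filter (fun t => t.1 = s), θstar t = 1)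
    (hstar : ∀ s : S,
      (∃ t ∈ Tstruct.filter (fun t => t.1 = s), condE t ≠ 0) →
      ∀ t ∈ Tstruct.filter (fun t => t.1 = s),
        θstar t = condE t / ∑ t' ∈ Tstruct.filter (fun t' => t'.1 = s), condE t') :
    ∀ θ : S × (Option A × S) → ℝ≥0∞,
      (∀ s : S, ∑ t ∈ Tstruct.filter (fun t => t.1 = s), θ t = 1) →
      (∑ s : S, ∑ t ∈ Tstruct.filter (fun t => t.1 = s),
          ENNReal.log (θ t) * ((condE t : ℝ≥0∞) : EReal))
        ≤ ∑ s : S, ∑ t ∈ Tstruct.filter (fun t => t.1 = s),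
            ENNReal.log (θstar t) * ((condE t : ℝ≥0∞) : EReal) := by
  intro θ hθ
  refine Finset.sum_le_sum fun s _ => ?_
  set F := Tstruct.filter (fun t => t.1 = s)
  by_cases hzero : ∀ t ∈ F, condE t = 0
  · have hvanish : ∀ g : S × (Option A × S) → ℝ≥0∞,
        ∑ t ∈ F, ENNReal.log (g t) * (condE t : EReal) = 0 := fun g =>
      Finset.sum_eq_zero fun t ht => by rw [hzero t ht, EReal.coe_ennreal_zero, mul_zero]
    rw [hvanish, hvanish]
  push Not at hzero
  have hnorm := hstar s hzero
  have hfin : ∑ t ∈ F, condE t ≠ ⊤ := by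
    intro htop
    have hsum := hstar_adm s
    rw [Finset.sum_congr rfl hnorm, htop] at hsum
    simp at hsum
  rw [Finset.sum_congr rfl fun t ht => congrArg (ENNReal.log · * (condE t : EReal)) (hnorm t ht)]
  exact ENNReal.sum_log_mul_le_sum_log_div_sum_mul (hθ s).le hfin

/-- Fix the HMM structure `Tstruct` and current parameters `θᵗ`
(the HMM `Mt`), a start state `s₀` and an observation `ỹ` with `P(Y=ỹ ∣ θᵗ) > 0`;
assume (standing assumption) that under `θᵗ` every state has a path of non-zero
probability containing an observable symbol.  Write
`E 𝗍 = E_{s₀}[X_𝗍 ∣ Y=ỹ, θᵗ]` and, for parameters `θ` on the transitions of the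
structure, `Q(θ ∣ θᵗ) = ∑_{s ∈ S} ∑_{𝗍 ∈ T^s_δ} log θ(𝗍) · E 𝗍`.  A parameter
setting `θ` is admissible when, for every `s`, `θ` restricted to `T^s_δ` is a
probability function.  If `θ⋆` is admissible and, for every state `s` whose
outgoing conditional expectations are not all zero, sets
`θ⋆(𝗍) = E 𝗍 / ∑_{𝗍' ∈ T^s_δ} E 𝗍'` on `T^s_δ`, then `θ⋆` maximizes `Q(· ∣ θᵗ)`
over all admissible parameter settings. -/
theorem Q_maximized_by_normalized_expectations {S A : Type*} [Fintype S] [Fintype A]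
    [DecidableEq S] [DecidableEq A]
    (Tstruct : Finset (S × (Option A × S)))
    (Mt : HMMeps S A)
    (ht : ∀ s p, Mt.δ s p ≠ 0 → (s, p) ∈ Tstruct)
    (hreach : ∀ s : S, ∃ z : List (Option A × S),
      0 < Mt.pathProb s z ∧ ∃ p ∈ z, (Prod.fst p).isSome = true)
    (s₀ : S) (ys : List A) (hpos : Pobs Mt s₀ ys ≠ 0)
    (condE : S × (Option A × S) → ℝ≥0∞)
    (hE : ∀ t, condE t = Cexp Mt s₀ ys t / Pobs Mt s₀ ys)
    (θstar : S × (Option A × S) → ℝ≥0∞)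
    (hstar_adm : ∀ s : S, ∑ t ∈ Tstruct.filter (fun t => t.1 = s), θstar t = 1)
    (hstar : ∀ s : S,
      (∃ t ∈ Tstruct.filter (fun t => t.1 = s), condE t ≠ 0) →
      ∀ t ∈ Tstruct.filter (fun t => t.1 = s),
        θstar t = condE t / ∑ t' ∈ Tstruct.filter (fun t' => t'.1 = s), condE t') :
    ∀ θ : S × (Option A × S) → ℝ≥0∞,
      (∀ s : S, ∑ t ∈ Tstruct.filter (fun t => t.1 = s), θ t = 1) →
      (∑ s : S, ∑ t ∈ Tstruct.filter (fun t => t.1 = s),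
          ENNReal.log (θ t) * ((condE t : ℝ≥0∞) : EReal))
        ≤ ∑ s : S, ∑ t ∈ Tstruct.filter (fun t => t.1 = s),
            ENNReal.log (θstar t) * ((condE t : ℝ≥0∞) : EReal) :=
  Q_maximized_by_normalized_expectations_general Tstruct condE θstar hstar_adm hstar

end HMMeps
end
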